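/- arXiv:2005.02516 — 7 statements merged into one kernel-verified Lean document; each statement's English description precedes it below -/
import Mathlib

section
/- Let M be an invertible N_p×N_p real matrix, W a diagonal N_q×N_q matrix, V_q an N_q×N_p matrix with M = V_qᵀ W V_q, and V_f an N_f×N_p matrix. Let Q̂ and B be real matrices of sizes N_p×N_p and N_f×N_f respectively satisfying the SBP property Q̂ + Q̂ᵀ = V_fᵀ B V_f. Define P_q = M⁻¹ V_qᵀ W, Q = P_qᵀ Q̂ P_q, and E = V_f P_q. Then the generalized SBP property holds: Q + Qᵀ = Eᵀ B E. -/
open Matrix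

/-- Given the SBP property `Q̂ + Q̂ᵀ = Vfᵀ * B * Vf` and the mass matrix
`M = Vqᵀ * W * Vq` (invertible, `W` diagonal), the nodal operator `Q = Pqᵀ * Q̂ * Pq`
with `Pq = M⁻¹ * Vqᵀ * W` and `E = Vf * Pq` satisfies the generalized SBP property
`Q + Qᵀ = Eᵀ * B * E`. -/
theorem generalized_SBP_property
    {Np Nq Nf : ℕ}
    (M : Matrix (Fin Np) (Fin Np) ℝ)
    (W : Matrix (Fin Nq) (Fin Nq) ℝ)
    (Vq : Matrix (Fin Nq) (Fin Np) ℝ)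
    (Vf : Matrix (Fin Nf) (Fin Np) ℝ)
    (Qhat : Matrix (Fin Np) (Fin Np) ℝ)
    (B : Matrix (Fin Nf) (Fin Nf) ℝ)
    (hM : IsUnit M)
    (hW : W.IsDiag)
    (hMdef : M = Vqᵀ * W * Vq)
    (hSBP : Qhat + Qhatᵀ = Vfᵀ * B * Vf) :
    letI Pq : Matrix (Fin Np) (Fin Nq) ℝ := M⁻¹ * Vqᵀ * W
    letI Q : Matrix (Fin Nq) (Fin Nq) ℝ := Pqᵀ * Qhat * Pq
    letI E : Matrix (Fin Nf) (Fin Nq) ℝ := Vf * Pq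
    Q + Qᵀ = Eᵀ * B * E := by
  set Pq : Matrix (Fin Np) (Fin Nq) ℝ := M⁻¹ * Vqᵀ * W with hPq
  show Pqᵀ * Qhat * Pq + (Pqᵀ * Qhat * Pq)ᵀ = (Vf * Pq)ᵀ * B * (Vf * Pq)
  have h1 : Pqᵀ * Qhat * Pq + (Pqᵀ * Qhat * Pq)ᵀ = Pqᵀ * (Qhat + Qhatᵀ) * Pq := by
    simp [Matrix.transpose_mul, Matrix.mul_add, Matrix.add_mul, Matrix.mul_assoc]
  rw [h1, hSBP]
  simp [Matrix.transpose_mul, Matrix.mul_assoc]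
end

section
/- Let Q be an N_q×N_q real matrix, B an N_f×N_f real matrix, and E an N_f×N_q real matrix such that Q + Qᵀ = Eᵀ B E, Q·𝟙 = 0 (where 𝟙 denotes the all-ones vector of length N_q), and E·𝟙 = 𝟙 (the all-ones vector of length N_f). Define the hybridized operator Q_h = (1/2)·[[Q − Qᵀ, Eᵀ B], [−B E, B]]. Then Q_h·𝟙 = 0, where 𝟙 is the all-ones vector of length N_q+N_f. -/
open Matrix

/-- If `Q + Qᵀ = Eᵀ B E`, `Q 𝟙 = 0` and `E 𝟙 = 𝟙`, then the hybridized
operator `Q_h = (1/2) • [[Q − Qᵀ, Eᵀ B], [−B E, B]]` annihilates the all-ones vector: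
`Q_h 𝟙 = 0`. -/
theorem hybridized_SBP_annihilates_constants
    {Nq Nf : ℕ}
    (Q : Matrix (Fin Nq) (Fin Nq) ℝ)
    (B : Matrix (Fin Nf) (Fin Nf) ℝ)
    (E : Matrix (Fin Nf) (Fin Nq) ℝ)
    (hSBP : Q + Qᵀ = Eᵀ * B * E)
    (hQ1 : Q *ᵥ (fun _ => (1 : ℝ)) = 0)
    (hE1 : E *ᵥ (fun _ => (1 : ℝ)) = fun _ => (1 : ℝ)) :
    letI Qh : Matrix (Fin Nq ⊕ Fin Nf) (Fin Nq ⊕ Fin Nf) ℝ :=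
      (1/2 : ℝ) • fromBlocks (Q - Qᵀ) (Eᵀ * B) (-(B * E)) B
    Qh *ᵥ (fun _ => (1 : ℝ)) = 0 := by
  have hQt : Qᵀ *ᵥ (fun _ => (1 : ℝ)) = Eᵀ *ᵥ (B *ᵥ (fun _ => (1 : ℝ))) := by
    have := congrArg (· *ᵥ (fun _ => (1 : ℝ))) hSBP
    simpa [add_mulVec, hQ1, mulVec_mulVec, ← mulVec_mulVec, hE1] using this
  have hvec : (fun _ => (1 : ℝ) : Fin Nq ⊕ Fin Nf → ℝ)
      = Sum.elim (fun _ => (1 : ℝ)) (fun _ => (1 : ℝ)) := by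
    funext x; cases x <;> rfl
  show ((1/2 : ℝ) • fromBlocks (Q - Qᵀ) (Eᵀ * B) (-(B * E)) B) *ᵥ _ = 0
  rw [hvec, smul_mulVec, fromBlocks_mulVec]
  funext x
  cases x with
  | inl i =>
      simp [Function.comp_def, sub_mulVec, hQ1, hQt, ← mulVec_mulVec]
  | inr j =>
      simp [Function.comp_def, neg_mulVec, ← mulVec_mulVec, hE1]
end

section
/- For j = 1, 2, let Q̂_h^j be (N_q+N_f)×(N_q+N_f) real matrices satisfying Q̂_h^j + (Q̂_h^j)ᵀ = [[0,0],[0,B^j]] where each B^j is a diagonal N_f×N_f matrix, and let G_j ∈ ℝ^{N_q+N_f} be vectors of geometric factors, written G_j = (G_j^q, G_j^f) with G_j^f ∈ ℝ^{N_f} the surface part. Define the physical operator Q_h = (1/2) Σ_{j=1}^{2} (diag(G_j) Q̂_h^j + Q̂_h^j diag(G_j)). Then Q_h + Q_hᵀ = [[0,0],[0,B]] with B = Σ_{j=1}^{2} diag(G_j^f) B^j. -/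
open Matrix

lemma diag_block {Nq Nf : ℕ} (G : Fin Nq ⊕ Fin Nf → ℝ) :
    diagonal G = fromBlocks (diagonal (fun i => G (Sum.inl i))) 0 0
      (diagonal (fun i => G (Sum.inr i))) := by
  rw [fromBlocks_diagonal]
  congr 1 with (i | i) <;> rfl

lemma key_piece {Nq Nf : ℕ}
    (Q : Matrix (Fin Nq ⊕ Fin Nf) (Fin Nq ⊕ Fin Nf) ℝ)
    (B : Matrix (Fin Nf) (Fin Nf) ℝ) (hB : B.IsDiag)
    (G : Fin Nq ⊕ Fin Nf → ℝ)
    (hSBP : Q + Qᵀ = fromBlocks 0 0 0 B) :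
    (diagonal G * Q + Q * diagonal G)
      + (diagonal G * Q + Q * diagonal G)ᵀ
      = fromBlocks 0 0 0 ((2 : ℝ) • (diagonal (fun i => G (Sum.inr i)) * B)) := by
  have hcomm : B * diagonal (fun i => G (Sum.inr i))
      = diagonal (fun i => G (Sum.inr i)) * B := by
    rw [← hB.diagonal_diag, diagonal_mul_diagonal, diagonal_mul_diagonal]
    simp [mul_comm]
  have h1 : (diagonal G * Q + Q * diagonal G)
      + (diagonal G * Q + Q * diagonal G)ᵀ
      = diagonal G * (Q + Qᵀ) + (Q + Qᵀ) * diagonal G := by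
    simp only [transpose_add, transpose_mul, diagonal_transpose, mul_add, add_mul]
    abel
  rw [h1, hSBP, diag_block G, fromBlocks_multiply, fromBlocks_multiply,
    fromBlocks_add]
  simp [hcomm, two_smul]

/-- Given reference hybridized SBP operators `Q̂_h^j` (j = 1, 2) with
`Q̂_h^j + (Q̂_h^j)ᵀ = [[0,0],[0,B^j]]`, `B^j` diagonal, and geometric factor vectors
`G_j = (G_j^q, G_j^f)`, the physical operator
`Q_h = (1/2) Σ_j (diag(G_j) Q̂_h^j + Q̂_h^j diag(G_j))` satisfies
`Q_h + Q_hᵀ = [[0,0],[0,B]]` with `B = Σ_j diag(G_j^f) B^j`. -/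
theorem physical_SBP_property_curved
    {Nq Nf : ℕ}
    (Qhat₁ Qhat₂ : Matrix (Fin Nq ⊕ Fin Nf) (Fin Nq ⊕ Fin Nf) ℝ)
    (B₁ B₂ : Matrix (Fin Nf) (Fin Nf) ℝ)
    (hB₁ : B₁.IsDiag) (hB₂ : B₂.IsDiag)
    (G₁ G₂ : Fin Nq ⊕ Fin Nf → ℝ)
    (hSBP₁ : Qhat₁ + Qhat₁ᵀ = fromBlocks 0 0 0 B₁)
    (hSBP₂ : Qhat₂ + Qhat₂ᵀ = fromBlocks 0 0 0 B₂) :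
    letI Qh : Matrix (Fin Nq ⊕ Fin Nf) (Fin Nq ⊕ Fin Nf) ℝ :=
      (1/2 : ℝ) • ((diagonal G₁ * Qhat₁ + Qhat₁ * diagonal G₁)
                 + (diagonal G₂ * Qhat₂ + Qhat₂ * diagonal G₂))
    letI B : Matrix (Fin Nf) (Fin Nf) ℝ :=
      diagonal (fun i => G₁ (Sum.inr i)) * B₁ + diagonal (fun i => G₂ (Sum.inr i)) * B₂
    Qh + Qhᵀ = fromBlocks 0 0 0 B := by
  have h1 := key_piece Qhat₁ B₁ hB₁ G₁ hSBP₁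
  have h2 := key_piece Qhat₂ B₂ hB₂ G₂ hSBP₂
  have key : (1/2 : ℝ) • ((diagonal G₁ * Qhat₁ + Qhat₁ * diagonal G₁)
                 + (diagonal G₂ * Qhat₂ + Qhat₂ * diagonal G₂))
      + ((1/2 : ℝ) • ((diagonal G₁ * Qhat₁ + Qhat₁ * diagonal G₁)
                 + (diagonal G₂ * Qhat₂ + Qhat₂ * diagonal G₂)))ᵀ = (1/2 : ℝ) •
      (((diagonal G₁ * Qhat₁ + Qhat₁ * diagonal G₁)
        + (diagonal G₁ * Qhat₁ + Qhat₁ * diagonal G₁)ᵀ)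
      + ((diagonal G₂ * Qhat₂ + Qhat₂ * diagonal G₂)
        + (diagonal G₂ * Qhat₂ + Qhat₂ * diagonal G₂)ᵀ)) := by
    simp only [transpose_smul, transpose_add, ← smul_add]
    congr 1
    abel
  rw [key, h1, h2, fromBlocks_add, fromBlocks_smul]
  simp [smul_add, smul_smul]
end

section
/- Fix g ∈ ℝ and set b = 0. For two states u_L = (h_L, h_L u_L, h_L v_L) and u_R = (h_R, h_R u_R, h_R v_R) with h_L, h_R > 0, define the x-direction numerical flux f_S^x(u_L, u_R) = ( ⟨hu⟩, ⟨hu⟩⟨u⟩ + g⟨h⟩² − (1/2)g⟨h²⟩, ⟨hu⟩⟨v⟩ ), where ⟨a⟩ = (a_L + a_R)/2 denotes the arithmetic average. Let v(u) = ( g h − (1/2)(u² + v²), u, v ) be the entropy variables and ψ^x(u) = (1/2) g h² u the x-direction entropy potential. Then the Tadmor entropy conservation condition holds: ( v(u_L) − v(u_R) )ᵀ f_S^x(u_L, u_R) = ψ^x(u_L) − ψ^x(u_R). -/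
/-- The x-direction entropy conservative numerical flux for the 2D SWE:
`f_S^x(u_L, u_R) = (⟨hu⟩, ⟨hu⟩⟨u⟩ + g⟨h⟩² − (1/2)g⟨h²⟩, ⟨hu⟩⟨v⟩)`, where
states are given in primitive form `(h, u, v)` (so `u = (h, hu, hv)`) and
`⟨·⟩` is the arithmetic average. -/
noncomputable def sweFluxSx (g : ℝ) (pL pR : ℝ × ℝ × ℝ) : ℝ × ℝ × ℝ :=
  ((pL.1 * pL.2.1 + pR.1 * pR.2.1) / 2,
   (pL.1 * pL.2.1 + pR.1 * pR.2.1) / 2 * ((pL.2.1 + pR.2.1) / 2)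
     + g * ((pL.1 + pR.1) / 2) ^ 2 - (1/2) * g * ((pL.1 ^ 2 + pR.1 ^ 2) / 2),
   (pL.1 * pL.2.1 + pR.1 * pR.2.1) / 2 * ((pL.2.2 + pR.2.2) / 2))

/-- The SWE entropy variables with zero bathymetry, in primitive variables:
`v(u) = (gh − (1/2)(u² + v²), u, v)`. -/
noncomputable def sweEntropyVars (g : ℝ) (p : ℝ × ℝ × ℝ) : ℝ × ℝ × ℝ :=
  (g * p.1 - (1/2) * (p.2.1 ^ 2 + p.2.2 ^ 2), p.2.1, p.2.2)

/-- The x-direction entropy potential `ψ^x(u) = (1/2) g h² u`. -/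
noncomputable def swePotentialX (g : ℝ) (p : ℝ × ℝ × ℝ) : ℝ :=
  (1/2) * g * p.1 ^ 2 * p.2.1

/-- the Tadmor entropy conservation condition
`(v(u_L) − v(u_R))ᵀ f_S^x(u_L, u_R) = ψ^x(u_L) − ψ^x(u_R)` holds for the
x-direction SWE flux, for all states with positive water height. -/
theorem swe_x_flux_entropy_conservative (g : ℝ)
    (pL pR : ℝ × ℝ × ℝ) (hhL : 0 < pL.1) (hhR : 0 < pR.1) :
    ((sweEntropyVars g pL).1 - (sweEntropyVars g pR).1) * (sweFluxSx g pL pR).1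
      + ((sweEntropyVars g pL).2.1 - (sweEntropyVars g pR).2.1) * (sweFluxSx g pL pR).2.1
      + ((sweEntropyVars g pL).2.2 - (sweEntropyVars g pR).2.2) * (sweFluxSx g pL pR).2.2
      = swePotentialX g pL - swePotentialX g pR := by
  obtain ⟨hL,uL,vL⟩ := pL; obtain ⟨hR,uR,vR⟩ := pR
  simp only [sweEntropyVars, sweFluxSx, swePotentialX]
  ring
end

section
/- Fix g ∈ ℝ. Let Q and B be n×n real matrices with B diagonal, satisfying Q + Qᵀ = B and Q·𝟙 = 0 (𝟙 the all-ones vector). Let h, u ∈ ℝⁿ with h_i > 0 for all i, representing 1D shallow water states u_i = (h_i, h_i u_i). Let v_i = ( g h_i − (1/2)u_i², u_i ) be the entropy variables, ψ_i = (1/2) g h_i² u_i the entropy potentials, f_i = ( h_i u_i, h_i u_i² + (1/2)g h_i² ) the physical fluxes, and F_{ij} = f_S^x(u_i, u_j) = ( ⟨hu⟩_{ij}, ⟨hu⟩_{ij}⟨u⟩_{ij} + g⟨h⟩_{ij}² − (1/2)g⟨h²⟩_{ij} ) the entropy conservative flux, where ⟨a⟩_{ij} = (a_i + a_j)/2. Then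 the flux-differencing entropy identity holds: Σ_{i=1}^{n} Σ_{j=1}^{n} 2 Q_{ij} (v_i)ᵀ F_{ij} = Σ_{i=1}^{n} B_{ii} ( (v_i)ᵀ f_i − ψ_i ). -/
/-!
Write `G i j = v_iᵀ F_{ij}`. Splitting `2 G_{ij} = (G_{ij} + G_{ji}) + (G_{ij} - G_{ji})`, the
symmetric part paired with `Q` only sees `Q + Qᵀ = B`, which is diagonal, and leaves
`Σ_i B_{ii} G_{ii}`. By symmetry of `f_S` and the Tadmor condition the antisymmetric part is
`ψ_i - ψ_j`; paired with `Q` it gives `-Σ_i B_{ii} ψ_i`, because the rows of `Q` sum to zero and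
hence its columns sum to the diagonal of `B`. Consistency `f_S(u, u) = f(u)` identifies
`G_{ii} - ψ_i` with `v_iᵀ f_i - ψ_i`.
-/

open Matrix Finset

namespace Matrix

variable {ι R : Type*} [Fintype ι] [CommRing R]

theorem IsDiag.sum_sum_mul {B : Matrix ι ι R} (hB : B.IsDiag) (G : ι → ι → R) :
    ∑ i, ∑ j, B i j * G i j = ∑ i, B i i * G i i := by
  refine sum_congr rfl fun i _ => sum_eq_single i (fun j _ hji => ?_) (by simp)
  rw [hB hji.symm, zero_mul]

/-- A summation-by-parts operator `Q` with boundary matrix `B`. -/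
structure IsSBP (Q B : Matrix ι ι R) : Prop where
  isDiag : B.IsDiag
  add_transpose : Q + Qᵀ = B
  mulVec_one : Q *ᵥ 1 = 0

namespace IsSBP

variable {Q B : Matrix ι ι R}

theorem sum_row_eq_zero (hQ : IsSBP Q B) (i : ι) : ∑ j, Q i j = 0 := by
  simpa [mulVec, dotProduct] using congrFun hQ.mulVec_one i

theorem add_swap_eq (hQ : IsSBP Q B) (i j : ι) : Q i j + Q j i = B i j := by
  simpa using congrFun (congrFun hQ.add_transpose i) j

theorem sum_col_eq_diag (hQ : IsSBP Q B) (j : ι) : ∑ i, Q i j = B j j := by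
  have hcol : ∑ i, Q i j = ∑ i, (B j i - Q j i) :=
    sum_congr rfl fun i _ => eq_sub_of_add_eq' (hQ.add_swap_eq j i)
  rw [hcol, sum_sub_distrib, hQ.sum_row_eq_zero, sub_zero,
    sum_eq_single j (fun i _ hij => hQ.isDiag hij.symm) (by simp)]

theorem sum_sum_mul_sub (hQ : IsSBP Q B) (ψ : ι → R) :
    ∑ i, ∑ j, Q i j * (ψ i - ψ j) = -∑ i, B i i * ψ i := by
  have hrows : ∑ i, ∑ j, Q i j * ψ i = 0 :=
    sum_eq_zero fun i _ => by rw [← sum_mul, hQ.sum_row_eq_zero, zero_mul]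
  have hcols : ∑ i, ∑ j, Q i j * ψ j = ∑ j, B j j * ψ j := by
    rw [sum_comm]
    exact sum_congr rfl fun j _ => by rw [← sum_mul, hQ.sum_col_eq_diag]
  simp only [mul_sub, sum_sub_distrib, hrows, hcols, zero_sub]

theorem sum_sum_mul_add_swap (hQ : IsSBP Q B) (G : ι → ι → R) :
    ∑ i, ∑ j, Q i j * (G i j + G j i) = ∑ i, B i i * G i i := by
  have hswap : ∑ i, ∑ j, Q i j * G j i = ∑ i, ∑ j, Q j i * G i j := sum_comm
  calc ∑ i, ∑ j, Q i j * (G i j + G j i)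
      = ∑ i, ∑ j, (Q i j + Q j i) * G i j := by
        simp only [mul_add, add_mul, sum_add_distrib, hswap]
    _ = ∑ i, B i i * G i i := by
        simp only [hQ.add_swap_eq]
        exact hQ.isDiag.sum_sum_mul G

theorem sum_sum_two_mul_eq_of_sub_swap_eq (hQ : IsSBP Q B) (G : ι → ι → R) (ψ : ι → R)
    (hG : ∀ i j, G i j - G j i = ψ i - ψ j) :
    ∑ i, ∑ j, 2 * Q i j * G i j = ∑ i, B i i * (G i i - ψ i) := by
  have hsplit : ∀ i j, 2 * Q i j * G i j = Q i j * (G i j + G j i) + Q i j * (ψ i - ψ j) :=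
    fun i j => by rw [← hG]; ring
  simp only [hsplit, sum_add_distrib]
  rw [hQ.sum_sum_mul_add_swap, hQ.sum_sum_mul_sub, ← sub_eq_add_neg, ← sum_sub_distrib]
  simp only [mul_sub]

end IsSBP

end Matrix

noncomputable section

namespace ShallowWater1D

-- States are given by depth `h` and velocity `u`, i.e. the conserved variables are `(h, h u)`.
def entropyVar (g h u : ℝ) : Fin 2 → ℝ := ![g * h - 1 / 2 * u ^ 2, u]

def entropyPotential (g h u : ℝ) : ℝ := 1 / 2 * g * h ^ 2 * u

def flux (g h u : ℝ) : Fin 2 → ℝ := ![h * u, h * u ^ 2 + 1 / 2 * g * h ^ 2]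

def entropyConservativeFlux (g hL uL hR uR : ℝ) : Fin 2 → ℝ :=
  ![(hL * uL + hR * uR) / 2,
    (hL * uL + hR * uR) / 2 * ((uL + uR) / 2) + g * ((hL + hR) / 2) ^ 2
      - 1 / 2 * g * ((hL ^ 2 + hR ^ 2) / 2)]

theorem entropyConservativeFlux_comm (g hL uL hR uR : ℝ) :
    entropyConservativeFlux g hL uL hR uR = entropyConservativeFlux g hR uR hL uL := by
  ext k; fin_cases k <;> simp [entropyConservativeFlux] <;> ring

theorem entropyConservativeFlux_self (g h u : ℝ) :
    entropyConservativeFlux g h u h u = flux g h u := by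
  ext k; fin_cases k <;> simp [entropyConservativeFlux, flux]; ring

theorem sub_entropyVar_dotProduct_entropyConservativeFlux (g hL uL hR uR : ℝ) :
    (entropyVar g hL uL - entropyVar g hR uR) ⬝ᵥ entropyConservativeFlux g hL uL hR uR
      = entropyPotential g hL uL - entropyPotential g hR uR := by
  simp [entropyVar, entropyConservativeFlux, entropyPotential, dotProduct, Fin.sum_univ_two]
  ring

end ShallowWater1D

end

open ShallowWater1D

theorem flux_differencing_entropy_identity_general
    {n : ℕ} (g : ℝ)
    (Q B : Matrix (Fin n) (Fin n) ℝ)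
    (hBdiag : B.IsDiag)
    (hSBP : Q + Qᵀ = B)
    (hQ1 : Q *ᵥ (fun _ => (1 : ℝ)) = 0)
    (h u : Fin n → ℝ) :
    ∑ i : Fin n, ∑ j : Fin n,
        2 * Q i j *
          ((g * h i - (1/2) * (u i) ^ 2) * ((h i * u i + h j * u j) / 2)
            + u i * ((h i * u i + h j * u j) / 2 * ((u i + u j) / 2)
                + g * ((h i + h j) / 2) ^ 2
                - (1/2) * g * ((h i ^ 2 + h j ^ 2) / 2)))
      = ∑ i : Fin n,
          B i i *
            ((g * h i - (1/2) * (u i) ^ 2) * (h i * u i)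
              + u i * (h i * (u i) ^ 2 + (1/2) * g * (h i) ^ 2)
              - (1/2) * g * (h i) ^ 2 * u i) := by
  let v i := entropyVar g (h i) (u i)
  let F i j := entropyConservativeFlux g (h i) (u i) (h j) (u j)
  let ψ i := entropyPotential g (h i) (u i)
  have hTadmor : ∀ i j, v i ⬝ᵥ F i j - v j ⬝ᵥ F j i = ψ i - ψ j := fun i j => by
    rw [show F j i = F i j from entropyConservativeFlux_comm .., ← sub_dotProduct]
    exact sub_entropyVar_dotProduct_entropyConservativeFlux ..
  calc _ = ∑ i, ∑ j, 2 * Q i j * (v i ⬝ᵥ F i j) := by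
        simp [v, F, entropyVar, entropyConservativeFlux, dotProduct, Fin.sum_univ_two]
    _ = ∑ i, B i i * (v i ⬝ᵥ F i i - ψ i) :=
        (IsSBP.mk hBdiag hSBP hQ1).sum_sum_two_mul_eq_of_sub_swap_eq _ ψ hTadmor
    _ = _ := sum_congr rfl fun i _ => by
        simp [v, F, ψ, entropyConservativeFlux_self, entropyVar, flux, entropyPotential,
          dotProduct, Fin.sum_univ_two]

/-- the flux-differencing entropy identity for 1D shallow water with
zero bathymetry. If `Q + Qᵀ = B` with `B` diagonal and `Q 𝟙 = 0`, states
`u_i = (h_i, h_i u_i)` with `h_i > 0`, entropy variables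
`v_i = (g h_i − (1/2)u_i², u_i)`, entropy potentials `ψ_i = (1/2) g h_i² u_i`,
physical fluxes `f_i = (h_i u_i, h_i u_i² + (1/2) g h_i²)`, and entropy
conservative fluxes `F_{ij} = (⟨hu⟩, ⟨hu⟩⟨u⟩ + g⟨h⟩² − (1/2)g⟨h²⟩)`, then
`Σ_i Σ_j 2 Q_{ij} v_iᵀ F_{ij} = Σ_i B_{ii} (v_iᵀ f_i − ψ_i)`. -/
theorem flux_differencing_entropy_identity
    {n : ℕ} (g : ℝ)
    (Q B : Matrix (Fin n) (Fin n) ℝ)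
    (hBdiag : B.IsDiag)
    (hSBP : Q + Qᵀ = B)
    (hQ1 : Q *ᵥ (fun _ => (1 : ℝ)) = 0)
    (h u : Fin n → ℝ)
    (hpos : ∀ i, 0 < h i) :
    ∑ i : Fin n, ∑ j : Fin n,
        2 * Q i j *
          ((g * h i - (1/2) * (u i) ^ 2) * ((h i * u i + h j * u j) / 2)
            + u i * ((h i * u i + h j * u j) / 2 * ((u i + u j) / 2)
                + g * ((h i + h j) / 2) ^ 2
                - (1/2) * g * ((h i ^ 2 + h j ^ 2) / 2)))
      = ∑ i : Fin n,
          B i i *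
            ((g * h i - (1/2) * (u i) ^ 2) * (h i * u i)
              + u i * (h i * (u i) ^ 2 + (1/2) * g * (h i) ^ 2)
              - (1/2) * g * (h i) ^ 2 * u i) :=
  flux_differencing_entropy_identity_general g Q B hBdiag hSBP hQ1 h u
end

section
/- Let Q, Q⁺, B be n×n real matrices with Q + Qᵀ = B and Q⁺ + (Q⁺)ᵀ = −B (the neighboring element has equal and opposite boundary matrix). Then for all vectors b, m, m⁺ ∈ ℝⁿ, the bathymetry boundary contributions from the two neighboring elements cancel: [ bᵀQm + mᵀQb + (1/2) bᵀB(m⁺ − m) ] + [ bᵀQ⁺m⁺ + (m⁺)ᵀQ⁺b + (1/2) bᵀ(−B)(m − m⁺) ] = 0. -/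
open Matrix

/-- cancellation of bathymetry boundary contributions across an
interface. If `Q + Qᵀ = B` and `Q⁺ + (Q⁺)ᵀ = −B` (neighboring element with equal
and opposite boundary matrix), then for all vectors `b, m, m⁺`,
`[bᵀQm + mᵀQb + (1/2)bᵀB(m⁺ − m)] + [bᵀQ⁺m⁺ + (m⁺)ᵀQ⁺b + (1/2)bᵀ(−B)(m − m⁺)] = 0`. -/
theorem bathymetry_boundary_cancellation
    {n : ℕ}
    (Q Qp B : Matrix (Fin n) (Fin n) ℝ)
    (hSBP : Q + Qᵀ = B)
    (hSBPp : Qp + Qpᵀ = -B)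
    (b m mp : Fin n → ℝ) :
    (b ⬝ᵥ (Q *ᵥ m) + m ⬝ᵥ (Q *ᵥ b) + (1/2) * (b ⬝ᵥ (B *ᵥ (mp - m))))
      + (b ⬝ᵥ (Qp *ᵥ mp) + mp ⬝ᵥ (Qp *ᵥ b) + (1/2) * (b ⬝ᵥ ((-B) *ᵥ (m - mp))))
      = 0 := by
  have h1 : m ⬝ᵥ (Q *ᵥ b) = b ⬝ᵥ (Qᵀ *ᵥ m) := by
    rw [Matrix.dotProduct_mulVec b Qᵀ m, Matrix.vecMul_transpose, dotProduct_comm]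
  have h2 : mp ⬝ᵥ (Qp *ᵥ b) = b ⬝ᵥ (Qpᵀ *ᵥ mp) := by
    rw [Matrix.dotProduct_mulVec b Qpᵀ mp, Matrix.vecMul_transpose, dotProduct_comm]
  have hB : Qᵀ = B - Q := by rw [← hSBP]; abel
  have hBp : Qpᵀ = -B - Qp := by rw [← hSBPp]; abel
  simp only [h1, h2, hB, hBp, Matrix.sub_mulVec, Matrix.mulVec_sub, Matrix.neg_mulVec,
    dotProduct_sub, dotProduct_neg, sub_dotProduct, neg_dotProduct]
  ring
end

section
/- Fix g, c ∈ ℝ. Let Q be an n×n real matrix with Q·𝟙 = 0 (𝟙 the all-ones vector), let h ∈ ℝⁿ, and set b = c·𝟙 − h (the lake-at-rest steady state h = c − b). Define F_{ij} = g( ((h_i + h_j)/2)² − (1/2)·(h_i² + h_j²)/2 ). Then for every index i, the flux-differencing volume term balances the bathymetry source term: 2 Σ_{j=1}^{n} Q_{ij} F_{ij} + g h_i (Q b)_i = 0. -/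
open Matrix Finset

/-- well-balancedness of the flux-differencing volume term for the
lake-at-rest steady state. If `Q 𝟙 = 0` and `b = c𝟙 − h`, then with
`F_{ij} = g(⟨h⟩² − (1/2)⟨h²⟩)`, for every `i`:
`2 Σ_j Q_{ij} F_{ij} + g h_i (Q b)_i = 0`. -/
theorem lake_at_rest_well_balanced
    {n : ℕ} (g c : ℝ)
    (Q : Matrix (Fin n) (Fin n) ℝ)
    (hQ1 : Q *ᵥ (fun _ => (1 : ℝ)) = 0)
    (h : Fin n → ℝ)
    (b : Fin n → ℝ)
    (hb : b = fun i => c - h i)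
    (i : Fin n) :
    2 * ∑ j : Fin n,
        Q i j * (g * (((h i + h j) / 2) ^ 2 - (1/2) * ((h i ^ 2 + h j ^ 2) / 2)))
      + g * h i * (Q *ᵥ b) i = 0 := by
  have h1 : ∑ j : Fin n, Q i j = 0 := by
    have := congrFun hQ1 i
    simpa [Matrix.mulVec, dotProduct] using this
  subst hb
  simp only [Matrix.mulVec, dotProduct]
  have e1 : ∑ j : Fin n,
      Q i j * (g * (((h i + h j) / 2) ^ 2 - (1/2) * ((h i ^ 2 + h j ^ 2) / 2)))
      = ∑ j : Fin n, Q i j * (g / 2 * (h i * h j)) := by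
    apply Finset.sum_congr rfl
    intro j _
    ring
  have e2 : ∑ j : Fin n, Q i j * (c - h j)
      = c * (∑ j : Fin n, Q i j) - ∑ j : Fin n, Q i j * h j := by
    rw [Finset.mul_sum, ← Finset.sum_sub_distrib]
    apply Finset.sum_congr rfl; intro j _; ring
  rw [e1, e2, h1]
  have e3 : 2 * ∑ j : Fin n, Q i j * (g / 2 * (h i * h j))
      = g * h i * ∑ j : Fin n, Q i j * h j := by
    rw [Finset.mul_sum, Finset.mul_sum]
    apply Finset.sum_congr rfl; intro j _; ring
  rw [e3]; ring
end
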